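/- Large-SNR asymptotics of the Rademacher mmse: for x > 0, 1 − ∫ tanh(t) · (2πx)^{−1/2} exp(−(t − x)²/(2x)) dt = √(π/2) · e^{−x/2} / √x · (1 + O(1/x)) as x → ∞; in particular log(1 − E tanh(x + √x Z)) = −x/2 (1 + o(1)) as x → ∞. -/

import Mathlib

/-!
Since `1 - tanh t = e^{-t} / cosh t` and tilting the `N(x, x)` density by `e^{-t}` gives `e^{-x/2}`
times the `N(0, x)` density, `mmse(x) = e^{-x/2} (2πx)^{-1/2} ∫ sech t · e^{-t²/(2x)} dt`.
The last integral tends to `∫ sech = π` with error at most `(∫ t² sech t dt) / (2x)`, because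
`0 ≤ 1 - e^{-s} ≤ s` for `s ≥ 0`. This is the `O(1/x)` relative error; in particular `mmse(x)` is
asymptotically equivalent to `√(π/2) e^{-x/2} / √x`, whose logarithm is `-x/2 + O(log x)`.
-/

open MeasureTheory Real Filter Topology

noncomputable def radMMSE (x : ℝ) : ℝ :=
  1 - ∫ t : ℝ, Real.tanh t * (Real.sqrt (2 * Real.pi * x))⁻¹ *
        Real.exp (-(t - x)^2 / (2*x))

open Asymptotics ProbabilityTheory
open scoped NNReal

namespace Real

lemma exp_abs_le_two_mul_cosh (t : ℝ) : exp |t| ≤ 2 * cosh t := by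
  rw [← cosh_abs, cosh_eq]
  linarith [exp_pos (-|t|)]

lemma one_add_sq_le_four_mul_cosh (t : ℝ) : 1 + t ^ 2 ≤ 4 * cosh t := by
  have hquad := quadratic_le_exp_of_nonneg (abs_nonneg t)
  nlinarith [exp_abs_le_two_mul_cosh t, abs_nonneg t, sq_abs t]

lemma sq_mul_one_add_sq_le_cosh (t : ℝ) : t ^ 2 * (1 + t ^ 2) ≤ 52 * cosh t := by
  have hquad := quadratic_le_exp_of_nonneg (abs_nonneg t)
  have hquartic := pow_div_factorial_le_exp |t| (abs_nonneg t) 4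
  rw [(by decide : Even 4).pow_abs, show (Nat.factorial 4 : ℝ) = 24 by norm_num [Nat.factorial]]
    at hquartic
  nlinarith [exp_abs_le_two_mul_cosh t, abs_nonneg t, sq_abs t]

lemma continuous_inv_cosh : Continuous fun t : ℝ => (cosh t)⁻¹ :=
  continuous_cosh.inv₀ fun t => (cosh_pos t).ne'

lemma integrable_inv_cosh : Integrable fun t : ℝ => (cosh t)⁻¹ := by
  refine (integrable_inv_one_add_sq.const_mul 4).mono' continuous_inv_cosh.aestronglyMeasurable
    (.of_forall fun t => ?_)
  rw [norm_of_nonneg (inv_pos.2 (cosh_pos t)).le, ← div_eq_mul_inv, le_div_iff₀ (by positivity),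
    inv_mul_le_iff₀ (cosh_pos t)]
  linarith [one_add_sq_le_four_mul_cosh t]

lemma integrable_sq_mul_inv_cosh : Integrable fun t : ℝ => t ^ 2 * (cosh t)⁻¹ := by
  refine (integrable_inv_one_add_sq.const_mul 52).mono'
    ((continuous_pow 2).mul continuous_inv_cosh).aestronglyMeasurable (.of_forall fun t => ?_)
  rw [norm_of_nonneg (by positivity), ← div_eq_mul_inv, ← div_eq_mul_inv,
    div_le_div_iff₀ (cosh_pos t) (by positivity)]
  linarith [sq_mul_one_add_sq_le_cosh t]

lemma hasDerivAt_arctan_sinh (t : ℝ) :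
    HasDerivAt (fun s => arctan (sinh s)) (cosh t)⁻¹ t := by
  refine ((hasDerivAt_arctan (sinh t)).comp t (hasDerivAt_sinh t)).congr_deriv ?_
  rw [← cosh_sq']
  field_simp

lemma integral_inv_cosh : ∫ t : ℝ, (cosh t)⁻¹ = π := by
  rw [integral_of_hasDerivAt_of_tendsto hasDerivAt_arctan_sinh integrable_inv_cosh
    ((tendsto_nhds_of_tendsto_nhdsWithin tendsto_arctan_atBot).comp
      sinhOrderIso.tendsto_atBot)
    ((tendsto_nhds_of_tendsto_nhdsWithin tendsto_arctan_atTop).comp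
      sinhOrderIso.tendsto_atTop)]
  ring

lemma one_sub_tanh (t : ℝ) : 1 - tanh t = exp (-t) / cosh t := by
  rw [tanh_eq_sinh_div_cosh, ← cosh_sub_sinh]
  field_simp [(cosh_pos t).ne']

end Real

namespace ProbabilityTheory

lemma exp_mul_mul_gaussianPDFReal (a μ : ℝ) (v : ℝ≥0) (t : ℝ) :
    exp (a * t) * gaussianPDFReal μ v t
      = exp (a * μ + a ^ 2 * v / 2) * gaussianPDFReal (μ + a * v) v t := by
  rcases eq_or_ne v 0 with rfl | hv
  · simp [gaussianPDFReal_zero_var]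
  simp only [gaussianPDFReal]
  rw [mul_left_comm, ← exp_add, mul_left_comm (exp _), ← exp_add]
  congr 2
  field_simp
  ring

end ProbabilityTheory

lemma abs_integral_mul_exp_neg_sq_div_sub_integral_le {f : ℝ → ℝ} (hf : Integrable f)
    (hf₂ : Integrable fun t => t ^ 2 * f t) {v : ℝ} (hv : 0 < v) :
    |(∫ t, f t * exp (-t ^ 2 / (2 * v))) - ∫ t, f t| ≤ (∫ t, t ^ 2 * |f t|) / (2 * v) := by
  have hexp_le_one (t : ℝ) : exp (-t ^ 2 / (2 * v)) ≤ 1 :=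
    exp_le_one_iff.2 (div_nonpos_of_nonpos_of_nonneg (by nlinarith) (by positivity))
  have hfexp : Integrable fun t => f t * exp (-t ^ 2 / (2 * v)) :=
    hf.mul_bdd (by fun_prop) (.of_forall fun t => by
      rw [norm_of_nonneg (exp_pos _).le]; exact hexp_le_one t)
  have hpointwise (t : ℝ) : |f t * exp (-t ^ 2 / (2 * v)) - f t| ≤ t ^ 2 * |f t| / (2 * v) := by
    have hsub : 1 - exp (-t ^ 2 / (2 * v)) ≤ t ^ 2 / (2 * v) := by
      linarith [neg_div (2 * v) (t ^ 2) ▸ one_sub_le_exp_neg (t ^ 2 / (2 * v))]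
    rw [← mul_sub_one, abs_mul, abs_of_nonpos (a := exp _ - 1) (by linarith [hexp_le_one t])]
    calc |f t| * -(exp (-t ^ 2 / (2 * v)) - 1) ≤ |f t| * (t ^ 2 / (2 * v)) := by
          gcongr; linarith
      _ = t ^ 2 * |f t| / (2 * v) := by ring
  calc |(∫ t, f t * exp (-t ^ 2 / (2 * v))) - ∫ t, f t|
      = |∫ t, (f t * exp (-t ^ 2 / (2 * v)) - f t)| := by rw [← integral_sub hfexp hf]
    _ ≤ ∫ t, |f t * exp (-t ^ 2 / (2 * v)) - f t| := abs_integral_le_integral_abs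
    _ ≤ ∫ t, t ^ 2 * |f t| / (2 * v) :=
        integral_mono (hfexp.sub hf).abs
          ((hf₂.abs.congr (.of_forall fun t => by simp [abs_mul])).div_const _) hpointwise
    _ = (∫ t, t ^ 2 * |f t|) / (2 * v) := integral_div _ _

lemma radMMSE_eq {x : ℝ} (hx : 0 < x) :
    radMMSE x = exp (-x / 2) * (√(2 * π * x))⁻¹ * ∫ t, (cosh t)⁻¹ * exp (-t ^ 2 / (2 * x)) := by
  set v := x.toNNReal
  have hv : (v : ℝ) = x := coe_toNNReal x hx.le
  have hv₀ : v ≠ 0 := by simpa [v] using hx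
  have hdensity (t : ℝ) :
      (√(2 * π * x))⁻¹ * exp (-(t - x) ^ 2 / (2 * x)) = gaussianPDFReal x v t := by
    simp [gaussianPDFReal, hv]
  have htilt (t : ℝ) : tanh t * gaussianPDFReal x v t
      = gaussianPDFReal x v t - exp (-x / 2) * ((cosh t)⁻¹ * gaussianPDFReal 0 v t) := by
    have hshift := exp_mul_mul_gaussianPDFReal (-1) x v t
    rw [hv, show -1 * x + (-1) ^ 2 * x / 2 = -x / 2 by ring, show x + -1 * x = 0 by ring,
      neg_one_mul] at hshift
    linear_combination (-gaussianPDFReal x v t) * one_sub_tanh t - (cosh t)⁻¹ * hshift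
  have hint : Integrable fun t => (cosh t)⁻¹ * gaussianPDFReal 0 v t :=
    (integrable_gaussianPDFReal 0 v).bdd_mul continuous_inv_cosh.aestronglyMeasurable
      (.of_forall fun t => by
        rw [norm_of_nonneg (inv_pos.2 (cosh_pos t)).le]
        exact inv_le_one_of_one_le₀ (one_le_cosh t))
  calc radMMSE x = 1 - ∫ t, tanh t * gaussianPDFReal x v t := by
        rw [radMMSE]
        congr 2 with t
        rw [mul_assoc, hdensity]
    _ = exp (-x / 2) * ∫ t, (cosh t)⁻¹ * gaussianPDFReal 0 v t := by
        simp_rw [htilt]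
        rw [integral_sub (integrable_gaussianPDFReal x v) (hint.const_mul _),
          integral_gaussianPDFReal_eq_one x hv₀, integral_const_mul]
        ring
    _ = exp (-x / 2) * (√(2 * π * x))⁻¹ * ∫ t, (cosh t)⁻¹ * exp (-t ^ 2 / (2 * x)) := by
        simp_rw [gaussianPDFReal, hv, sub_zero, mul_left_comm _ (√(2 * π * x))⁻¹]
        rw [integral_const_mul]
        ring

lemma abs_radMMSE_sub_le {x : ℝ} (hx : 0 < x) :
    |radMMSE x - √(π / 2) * exp (-x / 2) / √x|
      ≤ (∫ t, t ^ 2 * (cosh t)⁻¹) / (2 * π) / x * (√(π / 2) * exp (-x / 2) / √x) := by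
  set c := exp (-x / 2) * (√(2 * π * x))⁻¹
  have hc : 0 < c := by positivity
  have hm : √(π / 2) * exp (-x / 2) / √x = c * π := by
    have hsqrt : √(π / 2) * √(2 * π * x) = π * √x := by
      rw [← sqrt_mul (by positivity), show π / 2 * (2 * π * x) = π ^ 2 * x by ring,
        sqrt_mul (sq_nonneg π), sqrt_sq pi_pos.le]
    rw [div_eq_iff (sqrt_pos.2 hx).ne', mul_assoc c, ← hsqrt]
    simp only [c]
    field_simp
  have hJ := abs_integral_mul_exp_neg_sq_div_sub_integral_le integrable_inv_cosh
    integrable_sq_mul_inv_cosh hx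
  simp_rw [integral_inv_cosh, abs_of_pos (inv_pos.2 (cosh_pos _))] at hJ
  rw [radMMSE_eq hx, hm, ← mul_sub, abs_mul, abs_of_pos hc]
  calc c * |(∫ t, (cosh t)⁻¹ * exp (-t ^ 2 / (2 * x))) - π|
      ≤ c * ((∫ t, t ^ 2 * (cosh t)⁻¹) / (2 * x)) := by gcongr
    _ = (∫ t, t ^ 2 * (cosh t)⁻¹) / (2 * π) / x * (c * π) := by
        field_simp

lemma isEquivalent_of_abs_sub_le_div_mul {f g : ℝ → ℝ} {C : ℝ}
    (h : ∀ᶠ x in atTop, |f x - g x| ≤ C / x * g x) : f ~[atTop] g := by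
  have hO : (f - g) =O[atTop] fun x => x⁻¹ * g x := by
    refine .of_bound |C| (h.mono fun x hx => ?_)
    rw [Pi.sub_apply, norm_eq_abs, norm_eq_abs, ← abs_mul, ← mul_assoc, ← div_eq_mul_inv]
    exact hx.trans (le_abs_self _)
  have ho : (fun x => x⁻¹ * g x) =o[atTop] g := by
    simpa using ((isLittleO_one_iff ℝ).2 tendsto_inv_atTop_zero).mul_isBigO (isBigO_refl g atTop)
  exact hO.trans_isLittleO ho

lemma tendsto_log_div_of_isEquivalent {f g : ℝ → ℝ} {L : ℝ} (hfg : f ~[atTop] g)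
    (hg : ∀ᶠ x in atTop, g x ≠ 0) (hL : Tendsto (fun x => log (g x) / x) atTop (𝓝 L)) :
    Tendsto (fun x => log (f x) / x) atTop (𝓝 L) := by
  have hratio : Tendsto (fun x => f x / g x) atTop (𝓝 1) :=
    (isEquivalent_iff_tendsto_one hg).1 hfg
  have hf : ∀ᶠ x in atTop, f x ≠ 0 :=
    (hratio.eventually_ne one_ne_zero).mono fun x hx => (div_ne_zero_iff.1 hx).1
  have hlog : Tendsto (fun x => log (f x / g x) / x) atTop (𝓝 0) := by
    simpa using (hratio.log one_ne_zero).div_atTop tendsto_id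
  refine (add_zero L ▸ hL.add hlog).congr' ?_
  filter_upwards [hf, hg] with x hfx hgx
  rw [log_div hfx hgx]
  ring

lemma tendsto_log_mul_exp_div_sqrt_div_self {a : ℝ} (ha : 0 < a) :
    Tendsto (fun x => log (a * exp (-x / 2) / √x) / x) atTop (𝓝 (-1 / 2)) := by
  have hlog : Tendsto (fun x => log x / x) atTop (𝓝 0) :=
    isLittleO_log_id_atTop.tendsto_div_nhds_zero
  have hlim := (((tendsto_const_nhds (x := log a)).div_atTop tendsto_id).sub
    (hlog.div_const 2)).sub_const (1 / 2)
  rw [show (0 : ℝ) - 0 / 2 - 1 / 2 = -1 / 2 by norm_num] at hlim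
  refine hlim.congr' ?_
  filter_upwards [eventually_gt_atTop 0] with x hx
  rw [log_div (by positivity) (sqrt_pos.2 hx).ne', log_mul ha.ne' (exp_pos _).ne', log_exp,
    log_sqrt hx.le, id]
  field_simp
  ring

/-- Large-SNR asymptotics of the Rademacher mmse:
`mmse(x) = √(π/2) e^{−x/2}/√x (1 + O(1/x))` as `x → ∞`; in particular
`log mmse(x) = −(x/2)(1 + o(1))`, i.e. `log (mmse x) / x → −1/2`. -/
theorem radMMSE_asymptotics :
    (∃ C B : ℝ, 0 < C ∧ ∀ x : ℝ, B ≤ x →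
        |radMMSE x - Real.sqrt (Real.pi/2) * Real.exp (-x/2) / Real.sqrt x|
          ≤ (C / x) * (Real.sqrt (Real.pi/2) * Real.exp (-x/2) / Real.sqrt x))
    ∧ Tendsto (fun x : ℝ => Real.log (radMMSE x) / x) atTop (nhds (-(1:ℝ)/2)) := by
  have hK : 0 ≤ ∫ t, t ^ 2 * (cosh t)⁻¹ := integral_nonneg fun t => by positivity
  refine ⟨⟨(∫ t, t ^ 2 * (cosh t)⁻¹) / (2 * π) + 1, 1, by positivity, fun x hx => ?_⟩, ?_⟩
  · have hx₀ : 0 < x := one_pos.trans_le hx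
    refine (abs_radMMSE_sub_le hx₀).trans ?_
    gcongr
    linarith
  · refine tendsto_log_div_of_isEquivalent
      (isEquivalent_of_abs_sub_le_div_mul ((eventually_gt_atTop 0).mono
        fun x hx => abs_radMMSE_sub_le hx)) ?_ (tendsto_log_mul_exp_div_sqrt_div_self (by positivity))
    filter_upwards [eventually_gt_atTop 0] with x hx
    positivity
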